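/- Let L be a linear order of cardinality less than the continuum, whose partition tree T_L has no uncountable chains and admits a strictly order-preserving map into ℝ. Then L admits a strictly order-preserving map into ([0,1]^{<ω₁}_{↘0}, <_altlex). (In particular, every special Aronszajn line embeds into ([0,1]^{<ω₁}_{↘0}, <_altlex).) -/

import Mathlib

open Ordinal Set

noncomputable section

/-- Parity of an ordinal: `a = γ + n` with `γ` limit, `n < ω`; even iff `n` is even. -/
def OrdEven (a : Ordinal) : Prop := a % 2 = 0

/-- Upper semicontinuity. -/
def USC {X : Type} [TopologicalSpace X] (f : X → ℝ) : Prop :=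
  ∀ r : ℝ, IsOpen (f ⁻¹' Set.Iio r)

/-- The least ordinal where two transfinite sequences differ. -/
def dOrd (f g : Ordinal → ℝ) : Ordinal := sInf {a | f a ≠ g a}

/-- The alternating lexicographical order on transfinite sequences of reals. -/
def AltLex (f g : Ordinal → ℝ) : Prop :=
  f ≠ g ∧ ((OrdEven (dOrd f g) ∧ f (dOrd f g) < g (dOrd f g)) ∨
    (¬ OrdEven (dOrd f g) ∧ g (dOrd f g) < f (dOrd f g)))

/-- `f` encodes a strictly decreasing countable transfinite sequence in `[0,1]`
with last element `0` at index `ξ` (padded with `0` beyond `ξ`). -/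
def IsDSeqLen (f : Ordinal → ℝ) (ξ : Ordinal) : Prop :=
  ξ < (Cardinal.aleph 1).ord ∧ (∀ a, f a ∈ Set.Icc (0:ℝ) 1) ∧
  (∀ a b, a < b → b ≤ ξ → f b < f a) ∧ (∀ a, ξ ≤ a → f a = 0)

/-- Membership in `[0,1]^{<ω₁}_{↘0}`. -/
def IsDSeq (f : Ordinal → ℝ) : Prop := ∃ ξ, IsDSeqLen f ξ

/-- `Lev` is (the level structure of) a partition tree of the linear order `L`:
level 0 is `{univ}`; at successor stages each node is split into two disjoint
nonempty subintervals whenever possible; at limit stages one takes the nonempty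
intersections along branches. -/
structure IsPartitionTree (L : Type) [LinearOrder L] (Lev : Ordinal → Set (Set L)) : Prop where
  zero : Lev 0 = {Set.univ}
  interval : ∀ a : Ordinal, ∀ I ∈ Lev a, I.Nonempty ∧ I.OrdConnected
  succ : ∀ a : Ordinal, ∀ J : Set L, J ∈ Lev (a + 1) ↔
    ∃ I ∈ Lev a, ∃ I₀ I₁ : Set L, I₀.Nonempty ∧ I₁.Nonempty ∧ I₀ ∪ I₁ = I ∧
      I₀ ∩ I₁ = ∅ ∧ I₀ ∈ Lev (a + 1) ∧ I₁ ∈ Lev (a + 1) ∧ (J = I₀ ∨ J = I₁)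
  succSplit : ∀ a : Ordinal, ∀ I ∈ Lev a,
    (∃ I₀ I₁ : Set L, I₀.Nonempty ∧ I₁.Nonempty ∧ I₀ ∪ I₁ = I ∧ I₀ ∩ I₁ = ∅ ∧
      I₀.OrdConnected ∧ I₁.OrdConnected) →
    ∃ I₀ I₁ : Set L, I₀ ∈ Lev (a + 1) ∧ I₁ ∈ Lev (a + 1) ∧ I₀ ∪ I₁ = I ∧ I₀ ∩ I₁ = ∅
  limit : ∀ a : Ordinal, Order.IsSuccLimit a → ∀ J : Set L, J ∈ Lev a ↔
    (J.Nonempty ∧ ∃ I : Ordinal → Set L, (∀ b, b < a → I b ∈ Lev b) ∧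
      (∀ b c, b ≤ c → c < a → I c ⊆ I b) ∧ J = ⋂ b ∈ Set.Iio a, I b)

/-!
Follow the branch of `x` through the partition tree: the nodes containing `x` shrink strictly
until they become `{x}`, and since the tree has no uncountable chains this happens at a countable
level. Composing the special map with a decreasing sigmoid gives weights in `(0, 1)` that strictly
decrease along the tree. The sequence of `x` takes the weight of its node at limit levels, and at a
successor level a value strictly between the weight of the parent and the weights of both
children, in the lower or upper third according to the half containing `x` and the parity of the
level. Two points first separate at a successor level, into the lower and the upper half, and the
parity rule makes the alternating lexicographic comparison agree with the order of `L`.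
-/

universe u v

lemma Set.OrdConnected.forall_lt_or_forall_lt_of_disjoint {α : Type*} [LinearOrder α]
    {A B : Set α} (hA : A.OrdConnected) (hB : B.OrdConnected) (hAB : Disjoint A B) :
    (∀ p ∈ A, ∀ q ∈ B, p < q) ∨ (∀ p ∈ B, ∀ q ∈ A, p < q) := by
  by_contra! h
  obtain ⟨⟨p, hp, q, hq, hqp⟩, ⟨p', hp', q', hq', hqp'⟩⟩ := h
  rcases le_total p p' with h | h
  · exact hAB.ne_of_mem hp (hB.out hq hp' ⟨hqp, h⟩) rfl
  · exact hAB.ne_of_mem (hA.out hq' hp ⟨hqp', h⟩) hp' rfl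

lemma Ordinal.lift_mod_two (a : Ordinal.{u}) : lift.{v} (a % 2) = lift.{v} a % 2 := by
  conv_rhs => rw [← div_add_mod a 2, lift_add, lift_mul, lift_ofNat, mul_add_mod_self]
  exact (mod_eq_of_lt ((lift_lt.2 (mod_lt a two_ne_zero)).trans_eq (lift_ofNat 2))).symm

lemma ordEven_lift_iff {a : Ordinal.{u}} : OrdEven (lift.{v} a) ↔ OrdEven a := by
  rw [OrdEven, OrdEven, ← Ordinal.lift_mod_two, ← lift_zero.{u, v}, lift_inj]

section AltLex

variable {f g : Ordinal.{u} → ℝ} {d : Ordinal.{u}}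

lemma dOrd_eq_of_eqOn_Iio (hagree : ∀ b < d, f b = g b) (hne : f d ≠ g d) : dOrd f g = d :=
  le_antisymm (csInf_le' hne) (le_csInf ⟨d, hne⟩ fun _ hb => not_lt.1 fun h => hb (hagree _ h))

lemma eq_of_lt_dOrd {b : Ordinal.{u}} (hb : b < dOrd f g) : f b = g b :=
  not_not.1 (notMem_of_lt_csInf' hb)

lemma altLex_of_eqOn_Iio (hagree : ∀ b < d, f b = g b)
    (hd : OrdEven d ∧ f d < g d ∨ ¬ OrdEven d ∧ g d < f d) : AltLex f g := by
  have hne : f d ≠ g d := by rcases hd with ⟨-, h⟩ | ⟨-, h⟩ <;> [exact h.ne; exact h.ne']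
  rw [AltLex, dOrd_eq_of_eqOn_Iio hagree hne]
  exact ⟨fun h => hne (congrFun h d), hd⟩

lemma AltLex.apply_dOrd_ne (h : AltLex f g) : f (dOrd f g) ≠ g (dOrd f g) := by
  rcases h.2 with ⟨-, h⟩ | ⟨-, h⟩ <;> [exact h.ne; exact h.ne']

lemma AltLex.dOrd_lt_omega_one (h : AltLex f g) (hf : IsDSeq f) (hg : IsDSeq g) :
    dOrd f g < (Cardinal.aleph 1).ord := by
  obtain ⟨ξ, hξ, -, -, hf0⟩ := hf
  obtain ⟨η, hη, -, -, hg0⟩ := hg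
  by_contra! hd
  exact h.apply_dOrd_ne ((hf0 _ (hξ.le.trans hd)).trans (hg0 _ (hη.le.trans hd)).symm)

end AltLex

-- The tree and the target sequences may be indexed by ordinals of different universes;
-- `liftSeq` reindexes along `Ordinal.lift`, with value `0` at indices without a counterpart.
open Classical in
def liftSeq (f : Ordinal.{u} → ℝ) (a : Ordinal.{v}) : ℝ :=
  if h : ∃ b, lift.{v} b = lift.{u} a then f h.choose else 0

section liftSeq

variable {f g : Ordinal.{u} → ℝ}

lemma liftSeq_apply {a : Ordinal.{v}} {b : Ordinal.{u}} (h : lift.{v} b = lift.{u} a) :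
    liftSeq f a = f b := by
  have hex : ∃ b, lift.{v} b = lift.{u} a := ⟨b, h⟩
  rw [liftSeq, dif_pos hex, lift_inj.1 (hex.choose_spec.trans h.symm)]

lemma liftSeq_eq_zero_or (f : Ordinal.{u} → ℝ) (a : Ordinal.{v}) :
    liftSeq f a = 0 ∨ ∃ b, lift.{v} b = lift.{u} a ∧ liftSeq f a = f b := by
  by_cases h : ∃ b, lift.{v} b = lift.{u} a
  · obtain ⟨b, hb⟩ := h
    exact Or.inr ⟨b, hb, liftSeq_apply hb⟩
  · exact Or.inl (dif_neg h)

lemma exists_lift_eq_lift_of_le {b : Ordinal.{u}} {a a' : Ordinal.{v}}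
    (h : lift.{v} b = lift.{u} a) (ha : a' ≤ a) :
    ∃ b' : Ordinal.{u}, lift.{v} b' = lift.{u} a' :=
  mem_range_lift_of_le ((lift_le.2 ha).trans_eq h.symm)

lemma lift_omega_one_eq :
    lift.{v} (Cardinal.aleph.{u} 1).ord = lift.{u} (Cardinal.aleph.{v} 1).ord := by
  simp only [Cardinal.lift_ord, Cardinal.lift_aleph, lift_one]

lemma exists_lift_eq_lift_of_lt_omega_one {b : Ordinal.{u}} (hb : b < (Cardinal.aleph 1).ord) :
    ∃ a : Ordinal.{v}, lift.{v} b = lift.{u} a := by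
  obtain ⟨a, ha⟩ := exists_lift_eq_lift_of_le.{v, u} lift_omega_one_eq.{v, u} hb.le
  exact ⟨a, ha.symm⟩

lemma IsDSeqLen.liftSeq {ξ : Ordinal.{u}} {ξ' : Ordinal.{v}} (hf : IsDSeqLen f ξ)
    (hξ : lift.{v} ξ = lift.{u} ξ') : IsDSeqLen (liftSeq f) ξ' := by
  obtain ⟨hξω, hmem, hanti, hzero⟩ := hf
  refine ⟨?_, fun a => ?_, fun a b hab hb => ?_, fun a ha => ?_⟩
  · rw [← lift_lt.{u}, ← hξ, ← lift_omega_one_eq]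
    exact lift_lt.2 hξω
  · rcases liftSeq_eq_zero_or f a with h | ⟨b, -, h⟩ <;> rw [h]
    · exact ⟨le_rfl, zero_le_one⟩
    · exact hmem b
  · obtain ⟨b₀, hb₀⟩ := exists_lift_eq_lift_of_le hξ hb
    obtain ⟨a₀, ha₀⟩ := exists_lift_eq_lift_of_le hb₀ hab.le
    rw [liftSeq_apply ha₀, liftSeq_apply hb₀]
    refine hanti a₀ b₀ ?_ ?_
    · rw [← lift_lt.{v}, ha₀, hb₀]
      exact lift_lt.2 hab
    · rw [← lift_le.{v}, hb₀, hξ]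
      exact lift_le.2 hb
  · rcases liftSeq_eq_zero_or f a with h | ⟨b, hb, h⟩
    · exact h
    · rw [h]
      refine hzero b ?_
      rw [← lift_le.{v}, hb, hξ]
      exact lift_le.2 ha

lemma AltLex.liftSeq (h : AltLex f g) (hd : dOrd f g < (Cardinal.aleph 1).ord) :
    AltLex (liftSeq.{u, v} f) (liftSeq g) := by
  obtain ⟨d, hd'⟩ := exists_lift_eq_lift_of_lt_omega_one.{u, v} hd
  have heven : OrdEven d ↔ OrdEven (dOrd f g) := by
    rw [← ordEven_lift_iff.{v, u}, ← hd', ordEven_lift_iff]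
  refine altLex_of_eqOn_Iio (d := d) (fun b hb => ?_) ?_
  · obtain ⟨b₀, hb₀⟩ := exists_lift_eq_lift_of_le hd' hb.le
    rw [liftSeq_apply hb₀, liftSeq_apply hb₀]
    refine eq_of_lt_dOrd ?_
    rw [← lift_lt.{v}, hb₀, hd']
    exact lift_lt.2 hb
  · rw [liftSeq_apply hd', liftSeq_apply hd', heven]
    exact h.2

end liftSeq

namespace PartitionTree

variable {L : Type} [LinearOrder L] (Lev : Ordinal.{u} → Set (Set L))

structure IsOrderedSplit (a : Ordinal.{u}) (I : Set L) (S : Set L × Set L) : Prop where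
  fst_mem : S.1 ∈ Lev (a + 1)
  snd_mem : S.2 ∈ Lev (a + 1)
  union_eq : S.1 ∪ S.2 = I
  fst_nonempty : S.1.Nonempty
  snd_nonempty : S.2.Nonempty
  lt : ∀ p ∈ S.1, ∀ q ∈ S.2, p < q

def split (a : Ordinal.{u}) (I : Set L) : Set L × Set L :=
  Classical.epsilon (IsOrderedSplit Lev a I)

-- `split` is junk unless an ordered split exists; a node without one is its own child.
open Classical in
def child (a : Ordinal.{u}) (I : Set L) (x : L) : Set L :=
  if ∃ S, IsOrderedSplit Lev a I S then
    if x ∈ (split Lev a I).1 then (split Lev a I).1 else (split Lev a I).2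
  else I

def branch (x : L) (a : Ordinal.{u}) : Set L :=
  Ordinal.limitRecOn a univ (fun b I => child Lev b I x) fun a _ ih => ⋂ b : Iio a, ih b b.2

def singletonLevel (x : L) : Ordinal.{u} := sInf {a | branch Lev x a = {x}}

variable {Lev}

namespace IsOrderedSplit

variable {a : Ordinal.{u}} {I : Set L} {S : Set L × Set L} (h : IsOrderedSplit Lev a I S)
include h

lemma disjoint : Disjoint S.1 S.2 :=
  Set.disjoint_left.2 fun p hp hp' => lt_irrefl p (h.lt p hp p hp')

lemma fst_ssubset : S.1 ⊂ I := by
  obtain ⟨q, hq⟩ := h.snd_nonempty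
  rw [← h.union_eq, ssubset_iff_of_subset subset_union_left]
  exact ⟨q, Or.inr hq, h.disjoint.notMem_of_mem_right hq⟩

lemma snd_ssubset : S.2 ⊂ I := by
  obtain ⟨p, hp⟩ := h.fst_nonempty
  rw [← h.union_eq, ssubset_iff_of_subset subset_union_right]
  exact ⟨p, Or.inl hp, h.disjoint.notMem_of_mem_left hp⟩

lemma fst_ne_snd : S.1 ≠ S.2 := fun he =>
  h.disjoint.notMem_of_mem_left h.fst_nonempty.some_mem (he ▸ h.fst_nonempty.some_mem)

end IsOrderedSplit

lemma _root_.IsPartitionTree.exists_isOrderedSplit (hpt : IsPartitionTree L Lev)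
    {a : Ordinal.{u}} {I : Set L} (hI : I ∈ Lev a) (hnt : I.Nontrivial) :
    ∃ S, IsOrderedSplit Lev a I S := by
  obtain ⟨p, hp, q, hq, hpq⟩ := hnt.exists_lt
  have hconn := (hpt.interval a I hI).2
  obtain ⟨I₀, I₁, h₀, h₁, hunion, hinter⟩ := hpt.succSplit a I hI
    ⟨I ∩ Iic p, I ∩ Ioi p, ⟨p, hp, le_rfl⟩, ⟨q, hq, hpq⟩,
      by rw [← inter_union_distrib_left, Iic_union_Ioi, inter_univ],
      eq_empty_iff_forall_notMem.2 fun _ ⟨⟨_, h₁⟩, _, h₂⟩ => not_lt.2 h₁ h₂,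
      hconn.inter ordConnected_Iic, hconn.inter ordConnected_Ioi⟩
  obtain ⟨hne₀, hconn₀⟩ := hpt.interval _ _ h₀
  obtain ⟨hne₁, hconn₁⟩ := hpt.interval _ _ h₁
  rcases hconn₀.forall_lt_or_forall_lt_of_disjoint hconn₁
    (disjoint_iff_inter_eq_empty.2 hinter) with hlt | hlt
  · exact ⟨(I₀, I₁), h₀, h₁, hunion, hne₀, hne₁, hlt⟩
  · exact ⟨(I₁, I₀), h₁, h₀, union_comm I₀ I₁ ▸ hunion, hne₁, hne₀, hlt⟩

section child

variable {a : Ordinal.{u}} {I : Set L} {x y : L}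

lemma isOrderedSplit_split (h : ∃ S, IsOrderedSplit Lev a I S) :
    IsOrderedSplit Lev a I (split Lev a I) :=
  Classical.epsilon_spec h

lemma child_of_not_exists (h : ¬∃ S, IsOrderedSplit Lev a I S) : child Lev a I x = I :=
  if_neg h

lemma child_eq_fst_or_snd (h : ∃ S, IsOrderedSplit Lev a I S) :
    child Lev a I x = (split Lev a I).1 ∨ child Lev a I x = (split Lev a I).2 := by
  rw [child, if_pos h]
  split_ifs <;> simp

lemma mem_child (hx : x ∈ I) : x ∈ child Lev a I x := by
  by_cases h : ∃ S, IsOrderedSplit Lev a I S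
  · rw [child, if_pos h]
    split_ifs with hx₁
    · exact hx₁
    · rw [← (isOrderedSplit_split h).union_eq] at hx
      exact hx.resolve_left hx₁
  · rwa [child_of_not_exists h]

lemma child_ssubset (h : ∃ S, IsOrderedSplit Lev a I S) : child Lev a I x ⊂ I := by
  rcases child_eq_fst_or_snd (x := x) h with hc | hc <;> rw [hc]
  exacts [(isOrderedSplit_split h).fst_ssubset, (isOrderedSplit_split h).snd_ssubset]

lemma child_subset : child Lev a I x ⊆ I := by
  by_cases h : ∃ S, IsOrderedSplit Lev a I S
  · exact (child_ssubset h).subset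
  · rw [child_of_not_exists h]

lemma child_mem (h : ∃ S, IsOrderedSplit Lev a I S) : child Lev a I x ∈ Lev (a + 1) := by
  rcases child_eq_fst_or_snd (x := x) h with hc | hc <;> rw [hc]
  exacts [(isOrderedSplit_split h).fst_mem, (isOrderedSplit_split h).snd_mem]

lemma child_eq_fst_and_child_eq_snd (h : ∃ S, IsOrderedSplit Lev a I S) (hx : x ∈ I)
    (hxy : x < y) (hne : child Lev a I x ≠ child Lev a I y) :
    child Lev a I x = (split Lev a I).1 ∧ child Lev a I y = (split Lev a I).2 := by
  have hS := isOrderedSplit_split h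
  have hx₁ : x ∈ (split Lev a I).1 := by
    by_contra hx₁
    have hx₂ : x ∈ (split Lev a I).2 := by
      rw [← hS.union_eq] at hx
      exact hx.resolve_left hx₁
    refine hne ?_
    rw [child, child, if_pos h, if_pos h, if_neg hx₁,
      if_neg fun hy₁ => (hS.lt y hy₁ x hx₂).not_gt hxy]
  have hy₁ : y ∉ (split Lev a I).1 := fun hy₁ =>
    hne (by rw [child, child, if_pos h, if_pos h, if_pos hx₁, if_pos hy₁])
  rw [child, child, if_pos h, if_pos h, if_pos hx₁, if_neg hy₁]
  exact ⟨rfl, rfl⟩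

end child

section branch

variable {x : L} {a b : Ordinal.{u}}

@[simp]
lemma branch_zero : branch Lev x 0 = Set.univ :=
  Ordinal.limitRecOn_zero ..

lemma branch_add_one (a : Ordinal.{u}) :
    branch Lev x (a + 1) = child Lev a (branch Lev x a) x :=
  Ordinal.limitRecOn_add_one ..

lemma branch_of_isSuccLimit (ha : Order.IsSuccLimit a) :
    branch Lev x a = ⋂ b ∈ Iio a, branch Lev x b := by
  rw [branch, Ordinal.limitRecOn_limit _ _ _ _ ha, biInter_eq_iInter]
  rfl

lemma mem_branch (a : Ordinal.{u}) : x ∈ branch Lev x a := by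
  induction a using Ordinal.limitRecOn with
  | zero => simp
  | add_one a ih => rw [branch_add_one]; exact mem_child ih
  | limit a ha ih =>
    rw [branch_of_isSuccLimit ha]
    exact mem_iInter₂.2 ih

lemma branch_anti (hba : b ≤ a) : branch Lev x a ⊆ branch Lev x b := by
  induction a using Ordinal.limitRecOn with
  | zero => rw [nonpos_iff_eq_zero.1 hba]
  | add_one a ih =>
    rcases hba.lt_or_eq with h | rfl
    · exact (branch_add_one a).trans_subset (child_subset.trans (ih (Order.lt_add_one_iff.1 h)))
    · rfl
  | limit a ha ih =>
    rcases hba.lt_or_eq with h | rfl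
    · exact (branch_of_isSuccLimit ha).trans_subset (biInter_subset_of_mem h)
    · rfl

lemma singletonLevel_le (h : branch Lev x a = {x}) :
    singletonLevel Lev x ≤ a :=
  csInf_le' (s := {a | branch Lev x a = {x}}) h

variable (hpt : IsPartitionTree L Lev)
include hpt

lemma branch_mem (h : ∀ b < a, (branch Lev x b).Nontrivial) :
    branch Lev x a ∈ Lev a := by
  induction a using Ordinal.limitRecOn with
  | zero => simp [hpt.zero]
  | add_one a ih =>
    have hI := ih fun b hb => h b (hb.trans (lt_add_one a))
    rw [branch_add_one]
    exact child_mem (hpt.exists_isOrderedSplit hI (h a (lt_add_one a)))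
  | limit a ha ih =>
    rw [hpt.limit a ha]
    exact ⟨⟨x, mem_branch a⟩, branch Lev x, fun b hb => ih b hb fun c hc => h c (hc.trans hb),
      fun b c hbc _ => branch_anti hbc, branch_of_isSuccLimit ha⟩

lemma exists_isOrderedSplit_branch (h : (branch Lev x a).Nontrivial) :
    ∃ S, IsOrderedSplit Lev a (branch Lev x a) S :=
  hpt.exists_isOrderedSplit (branch_mem hpt fun _ hb => h.mono (branch_anti hb.le)) h

lemma branch_ssubset (hb : (branch Lev x b).Nontrivial) (hba : b < a) :
    branch Lev x a ⊂ branch Lev x b :=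
  calc branch Lev x a ⊆ branch Lev x (b + 1) := branch_anti (Order.add_one_le_iff.2 hba)
    _ = child Lev b (branch Lev x b) x := branch_add_one b
    _ ⊂ branch Lev x b := child_ssubset (exists_isOrderedSplit_branch hpt hb)

variable (hchain : ∀ C : Set (Set L), (∀ I ∈ C, ∃ a, I ∈ Lev a) →
  IsChain (· ⊆ ·) C → C.Countable)
include hchain

lemma exists_branch_eq_singleton (x : L) :
    ∃ a < (Cardinal.aleph 1).ord, branch Lev x a = {x} := by
  by_contra! h
  have hnt : ∀ a < (Cardinal.aleph 1).ord, (branch Lev x a).Nontrivial := fun a ha =>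
    (nontrivial_iff_ne_singleton (mem_branch a)).2 (h a ha)
  have hcount : (branch Lev x '' Iio (Cardinal.aleph 1).ord).Countable := by
    refine hchain _ ?_ ?_
    · rintro _ ⟨a, ha, rfl⟩
      exact ⟨a, branch_mem hpt fun b hb => hnt b (hb.trans ha)⟩
    · rintro _ ⟨a, -, rfl⟩ _ ⟨b, -, rfl⟩ -
      rcases le_total a b with hab | hab
      exacts [Or.inr (branch_anti hab), Or.inl (branch_anti hab)]
  have hinj : InjOn (branch Lev x) (Iio (Cardinal.aleph 1).ord) := by
    intro a ha b hb hab
    by_contra hne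
    rcases lt_or_gt_of_ne hne with h | h
    exacts [(branch_ssubset hpt (hnt a ha) h).ne hab.symm,
      (branch_ssubset hpt (hnt b hb) h).ne hab]
  have := countable_of_injective_of_countable_image hinj hcount
  rw [← Cardinal.le_aleph0_iff_set_countable] at this
  simp at this

lemma singletonLevel_lt_omega_one (x : L) : singletonLevel Lev x < (Cardinal.aleph 1).ord :=
  have ⟨_, ha, hax⟩ := exists_branch_eq_singleton hpt hchain x
  (singletonLevel_le hax).trans_lt ha

lemma branch_singletonLevel (x : L) : branch Lev x (singletonLevel Lev x) = {x} :=
  have ⟨a, _, hax⟩ := exists_branch_eq_singleton hpt hchain x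
  csInf_mem (s := {a | branch Lev x a = {x}}) ⟨a, hax⟩

lemma branch_eq_singleton_of_le (ha : singletonLevel Lev x ≤ a) : branch Lev x a = {x} :=
  ((branch_anti ha).trans (branch_singletonLevel hpt hchain x).subset).antisymm
    (singleton_subset_iff.2 (mem_branch a))

lemma nontrivial_branch_iff : (branch Lev x a).Nontrivial ↔ a < singletonLevel Lev x := by
  rw [nontrivial_iff_ne_singleton (mem_branch a)]
  exact ⟨fun h => not_le.1 fun hle => h (branch_eq_singleton_of_le hpt hchain hle),
    fun h hax => (singletonLevel_le hax).not_gt h⟩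

lemma branch_mem_of_le (ha : a ≤ singletonLevel Lev x) : branch Lev x a ∈ Lev a :=
  branch_mem hpt fun _ hb => (nontrivial_branch_iff hpt hchain).2 (hb.trans_le ha)

lemma exists_branch_eq_and_branch_add_one_ne {y : L} (hxy : x ≠ y) :
    ∃ c, (∀ b ≤ c, branch Lev x b = branch Lev y b) ∧
      branch Lev x (c + 1) ≠ branch Lev y (c + 1) := by
  set D := {a | branch Lev x a ≠ branch Lev y a}
  have hD : D.Nonempty := by
    refine ⟨max (singletonLevel Lev x) (singletonLevel Lev y), fun h => hxy ?_⟩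
    rwa [branch_eq_singleton_of_le hpt hchain (le_max_left _ _),
      branch_eq_singleton_of_le hpt hchain (le_max_right _ _), singleton_eq_singleton_iff] at h
  have hmin : ∀ b < sInf D, branch Lev x b = branch Lev y b := fun b hb =>
    not_not.1 (notMem_of_lt_csInf' hb)
  have hne : sInf D ∈ D := csInf_mem hD
  rcases Ordinal.zero_or_succ_or_isSuccLimit (sInf D) with h | ⟨c, hc⟩ | hlim
  · exact (hne (by rw [h, branch_zero, branch_zero])).elim
  · rw [Order.succ_eq_add_one] at hc
    exact ⟨c, fun b hb => hmin b (hb.trans_lt (hc ▸ lt_add_one c)), hc ▸ hne⟩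
  · refine absurd ?_ hne
    rw [branch_of_isSuccLimit hlim, branch_of_isSuccLimit hlim]
    exact iInter₂_congr hmin

end branch

section seq

-- `m` bounds the weights of both children, so either value lies strictly between the weight
-- of the child and that of the parent.
variable (Lev) in
open Classical in
def childVal (w : Set L → ℝ) (c : Ordinal.{u}) (I J : Set L) : ℝ :=
  let m := max (w (split Lev c I).1) (w (split Lev c I).2)
  if J = (split Lev c I).1 ↔ OrdEven (c + 1) then (2 * m + w I) / 3 else (m + 2 * w I) / 3

variable (Lev) in
def seq (w : Set L → ℝ) (x : L) (a : Ordinal.{u}) : ℝ :=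
  if singletonLevel Lev x < a then 0 else
    Ordinal.limitRecOn (motive := fun _ => ℝ) a (w (branch Lev x 0))
      (fun c _ => childVal Lev w c (branch Lev x c) (branch Lev x (c + 1)))
      fun a _ _ => w (branch Lev x a)

variable {w : Set L → ℝ} {c : Ordinal.{u}} {I : Set L}

lemma childVal_mem_Ioo (J : Set L)
    (hm : max (w (split Lev c I).1) (w (split Lev c I).2) < w I) :
    childVal Lev w c I J ∈ Ioo (max (w (split Lev c I).1) (w (split Lev c I).2)) (w I) := by
  simp only [childVal]
  split_ifs <;> constructor <;> linarith

lemma childVal_fst_lt_snd_or_snd_lt_fst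
    (hm : max (w (split Lev c I).1) (w (split Lev c I).2) < w I)
    (hne : (split Lev c I).1 ≠ (split Lev c I).2) :
    OrdEven (c + 1) ∧
        childVal Lev w c I (split Lev c I).1 < childVal Lev w c I (split Lev c I).2 ∨
      ¬OrdEven (c + 1) ∧
        childVal Lev w c I (split Lev c I).2 < childVal Lev w c I (split Lev c I).1 := by
  by_cases he : OrdEven (c + 1)
  · refine Or.inl ⟨he, ?_⟩
    simp only [childVal, he, iff_true, if_true, if_neg hne.symm]
    linarith
  · refine Or.inr ⟨he, ?_⟩
    simp only [childVal, he, iff_false, if_pos hne.symm, not_true_eq_false, if_false]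
    linarith

variable {x y : L} {a : Ordinal.{u}}

lemma seq_of_lt (h : singletonLevel Lev x < a) : seq Lev w x a = 0 :=
  if_pos h

lemma seq_zero : seq Lev w x 0 = w (branch Lev x 0) := by
  rw [seq, if_neg (not_lt.2 zero_le), Ordinal.limitRecOn_zero]

lemma seq_add_one (h : c + 1 ≤ singletonLevel Lev x) :
    seq Lev w x (c + 1) = childVal Lev w c (branch Lev x c) (branch Lev x (c + 1)) := by
  rw [seq, if_neg (not_lt.2 h), Ordinal.limitRecOn_add_one]

lemma seq_of_isSuccLimit (ha : Order.IsSuccLimit a) (h : a ≤ singletonLevel Lev x) :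
    seq Lev w x a = w (branch Lev x a) := by
  rw [seq, if_neg (not_lt.2 h), Ordinal.limitRecOn_limit _ _ _ _ ha]

lemma seq_eq_of_branch_eq (hx : a ≤ singletonLevel Lev x) (hy : a ≤ singletonLevel Lev y)
    (h : ∀ b ≤ a, branch Lev x b = branch Lev y b) : seq Lev w x a = seq Lev w y a := by
  rcases Ordinal.zero_or_succ_or_isSuccLimit a with rfl | ⟨c, rfl⟩ | ha
  · rw [seq_zero, seq_zero, h 0 le_rfl]
  · rw [Order.succ_eq_add_one] at hx hy h ⊢
    rw [seq_add_one hx, seq_add_one hy, h c (lt_add_one c).le, h (c + 1) le_rfl]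
  · rw [seq_of_isSuccLimit ha hx, seq_of_isSuccLimit ha hy, h a le_rfl]

end seq

lemma IsOrderedSplit.max_lt {w : Set L → ℝ}
    (hw : ∀ I J, (∃ a, I ∈ Lev a) → (∃ b, J ∈ Lev b) → J ⊂ I → w J < w I)
    {c : Ordinal.{u}} {I : Set L} {S : Set L × Set L} (hS : IsOrderedSplit Lev c I S)
    (hI : I ∈ Lev c) : max (w S.1) (w S.2) < w I :=
  _root_.max_lt (hw _ _ ⟨c, hI⟩ ⟨c + 1, hS.fst_mem⟩ hS.fst_ssubset)
    (hw _ _ ⟨c, hI⟩ ⟨c + 1, hS.snd_mem⟩ hS.snd_ssubset)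

section embedding

variable (hpt : IsPartitionTree L Lev)
  (hchain : ∀ C : Set (Set L), (∀ I ∈ C, ∃ a, I ∈ Lev a) →
    IsChain (· ⊆ ·) C → C.Countable)
  {w : Set L → ℝ}
  (hw : ∀ I J, (∃ a, I ∈ Lev a) → (∃ b, J ∈ Lev b) → J ⊂ I → w J < w I)
  {x y : L} {a b c : Ordinal.{u}}
include hpt hchain hw

lemma weight_branch_lt (hba : b < a) (ha : a ≤ singletonLevel Lev x) :
    w (branch Lev x a) < w (branch Lev x b) :=
  hw _ _ ⟨b, branch_mem_of_le hpt hchain (hba.le.trans ha)⟩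
    ⟨a, branch_mem_of_le hpt hchain ha⟩
    (branch_ssubset hpt ((nontrivial_branch_iff hpt hchain).2 (hba.trans_le ha)) hba)

lemma seq_add_one_mem_Ioo (h : c + 1 ≤ singletonLevel Lev x) :
    seq Lev w x (c + 1) ∈ Ioo (w (branch Lev x (c + 1))) (w (branch Lev x c)) := by
  have hc := (nontrivial_branch_iff hpt hchain).2 (Order.add_one_le_iff.1 h)
  have hsplit := exists_isOrderedSplit_branch hpt hc
  have hm := (isOrderedSplit_split hsplit).max_lt hw (branch_mem_of_le hpt hchain
    (Order.add_one_le_iff.1 h).le)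
  obtain ⟨hlow, hhigh⟩ := childVal_mem_Ioo (branch Lev x (c + 1)) hm
  rw [seq_add_one h]
  refine ⟨lt_of_le_of_lt ?_ hlow, hhigh⟩
  rw [branch_add_one]
  rcases child_eq_fst_or_snd (x := x) hsplit with h' | h' <;> rw [h']
  exacts [le_max_left _ _, le_max_right _ _]

lemma weight_branch_le_seq_and_seq_lt (ha : a ≤ singletonLevel Lev x) :
    w (branch Lev x a) ≤ seq Lev w x a ∧ ∀ b < a, seq Lev w x a < w (branch Lev x b) := by
  rcases Ordinal.zero_or_succ_or_isSuccLimit a with rfl | ⟨c, rfl⟩ | hlim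
  · exact ⟨seq_zero.ge, fun b hb => absurd hb (not_lt.2 zero_le)⟩
  · rw [Order.succ_eq_add_one] at ha ⊢
    obtain ⟨hlow, hhigh⟩ := seq_add_one_mem_Ioo hpt hchain hw ha
    refine ⟨hlow.le, fun b hb => hhigh.trans_le ?_⟩
    rcases (Order.lt_add_one_iff.1 hb).lt_or_eq with hbc | rfl
    exacts [(weight_branch_lt hpt hchain hw hbc ((lt_add_one c).le.trans ha)).le, le_rfl]
  · rw [seq_of_isSuccLimit hlim ha]
    exact ⟨le_rfl, fun b hb => weight_branch_lt hpt hchain hw hb ha⟩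

lemma isDSeqLen_seq (hw01 : ∀ I, w I ∈ Ioo 0 1) (x : L) :
    IsDSeqLen (seq Lev w x) (singletonLevel Lev x + 1) := by
  have hbounds := fun a (ha : a ≤ singletonLevel Lev x) =>
    weight_branch_le_seq_and_seq_lt hpt hchain hw ha
  refine ⟨(Cardinal.isSuccLimit_ord (Cardinal.aleph0_le_aleph 1)).add_one_lt
    (singletonLevel_lt_omega_one hpt hchain x), fun a => ?_, fun b a hba ha => ?_, fun a ha => ?_⟩
  · by_cases ha : singletonLevel Lev x < a
    · rw [seq_of_lt ha]
      exact ⟨le_rfl, zero_le_one⟩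
    · refine ⟨(hw01 _).1.le.trans (hbounds a (not_lt.1 ha)).1, ?_⟩
      rcases eq_zero_or_pos a with rfl | ha₀
      · exact seq_zero.trans_le (hw01 _).2.le
      · exact ((hbounds a (not_lt.1 ha)).2 0 ha₀).le.trans (hw01 _).2.le
  · have hb := (hbounds b (Order.lt_add_one_iff.1 (hba.trans_le ha))).1
    refine lt_of_lt_of_le ?_ hb
    by_cases ha' : a ≤ singletonLevel Lev x
    · exact (hbounds a ha').2 b hba
    · rw [seq_of_lt (not_le.1 ha')]
      exact (hw01 _).1
  · exact seq_of_lt (Order.add_one_le_iff.1 ha)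

lemma altLex_seq (hxy : x < y) : AltLex (seq Lev w x) (seq Lev w y) := by
  obtain ⟨c, heq, hne⟩ := exists_branch_eq_and_branch_add_one_ne hpt hchain hxy.ne
  have hnt : (branch Lev x c).Nontrivial :=
    ⟨x, mem_branch c, y, heq c le_rfl ▸ mem_branch c, hxy.ne⟩
  have hcx : c < singletonLevel Lev x := (nontrivial_branch_iff hpt hchain).1 hnt
  have hcy : c < singletonLevel Lev y := (nontrivial_branch_iff hpt hchain).1 (heq c le_rfl ▸ hnt)
  have hsplit := exists_isOrderedSplit_branch hpt hnt
  rw [branch_add_one, branch_add_one, ← heq c le_rfl] at hne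
  obtain ⟨hx₁, hy₂⟩ := child_eq_fst_and_child_eq_snd hsplit (mem_branch c) hxy hne
  refine altLex_of_eqOn_Iio (d := c + 1) (fun b hb => ?_) ?_
  · have hbc := Order.lt_add_one_iff.1 hb
    exact seq_eq_of_branch_eq (hbc.trans hcx.le) (hbc.trans hcy.le)
      fun b' hb' => heq b' (hb'.trans hbc)
  · rw [seq_add_one (Order.add_one_le_iff.2 hcx), seq_add_one (Order.add_one_le_iff.2 hcy),
      branch_add_one, branch_add_one, ← heq c le_rfl, hx₁, hy₂]
    exact childVal_fst_lt_snd_or_snd_lt_fst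
      ((isOrderedSplit_split hsplit).max_lt hw (branch_mem_of_le hpt hchain hcx.le))
      (isOrderedSplit_split hsplit).fst_ne_snd

end embedding

end PartitionTree

open PartitionTree in
theorem stmt_18_general (L : Type) [LinearOrder L]
    (Lev : Ordinal → Set (Set L)) (hpt : IsPartitionTree L Lev)
    (hchain : ∀ C : Set (Set L), (∀ I ∈ C, ∃ a, I ∈ Lev a) →
      IsChain (· ⊆ ·) C → C.Countable)
    (hspec : ∃ Φ : Set L → ℝ, ∀ I J : Set L, (∃ a, I ∈ Lev a) → (∃ b, J ∈ Lev b) →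
      J ⊂ I → Φ I < Φ J) :
    ∃ Ψ : L → Ordinal → ℝ, (∀ x, IsDSeq (Ψ x)) ∧
      ∀ x y : L, x < y → AltLex (Ψ x) (Ψ y) := by
  obtain ⟨Φ, hΦ⟩ := hspec
  let w : Set L → ℝ := fun I => Real.sigmoid (-Φ I)
  have hw : ∀ I J, (∃ a, I ∈ Lev a) → (∃ b, J ∈ Lev b) → J ⊂ I → w J < w I :=
    fun I J hI hJ hJI => Real.sigmoid_strictMono (neg_lt_neg (hΦ I J hI hJ hJI))
  have hseq : ∀ x, IsDSeqLen (seq Lev w x) (singletonLevel Lev x + 1) :=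
    isDSeqLen_seq hpt hchain hw fun _ => ⟨Real.sigmoid_pos _, Real.sigmoid_lt_one _⟩
  refine ⟨fun x => liftSeq (seq Lev w x), fun x => ?_, fun x y hxy => ?_⟩
  · obtain ⟨ξ, hξ⟩ := exists_lift_eq_lift_of_lt_omega_one (hseq x).1
    exact ⟨ξ, (hseq x).liftSeq hξ⟩
  · have h := altLex_seq hpt hchain hw hxy
    exact h.liftSeq (h.dOrd_lt_omega_one ⟨_, hseq x⟩ ⟨_, hseq y⟩)

theorem stmt_18 (L : Type) [LinearOrder L]
    (hcard : Cardinal.mk L < Cardinal.continuum)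
    (Lev : Ordinal → Set (Set L)) (hpt : IsPartitionTree L Lev)
    (hchain : ∀ C : Set (Set L), (∀ I ∈ C, ∃ a, I ∈ Lev a) →
      IsChain (· ⊆ ·) C → C.Countable)
    (hspec : ∃ Φ : Set L → ℝ, ∀ I J : Set L, (∃ a, I ∈ Lev a) → (∃ b, J ∈ Lev b) →
      J ⊂ I → Φ I < Φ J) :
    ∃ Ψ : L → Ordinal → ℝ, (∀ x, IsDSeq (Ψ x)) ∧
      ∀ x y : L, x < y → AltLex (Ψ x) (Ψ y) :=
  stmt_18_general L Lev hpt hchain hspec
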